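/- arXiv:2402.19151 — 3 statements merged into one kernel-verified Lean document; each statement's English description precedes it below -/
import Mathlib

section
/- Let A be a nonempty finite alphabet, let Ω₁ and Ω₂ be subshifts of A^ℤ, and let ρ ≥ 1 be a natural number. Then the Hausdorff distance satisfies d_H(Ω₁, Ω₂) ≤ 1/(ρ+1) if and only if W(Ω₁)_{2ρ−1} = W(Ω₂)_{2ρ−1}, i.e. the two subshifts have exactly the same words of length 2ρ−1. -/
namespace QC

variable {A : Type*}

/-- The shift action of `ℤ` on configurations: `(m · ω)(n) = ω (n - m)`. -/
def shift (m : ℤ) (ω : ℤ → A) : ℤ → A := fun n => ω (n - m)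

/-- The word `u` occurs in the configuration `ω` (at some position `k`). -/
def Occurs (u : List A) (ω : ℤ → A) : Prop :=
  ∃ k : ℤ, u = (List.range u.length).map fun i => ω (k + i)

/-- The dictionary of a configuration: all (nonempty) words occurring in it. -/
def Dict (ω : ℤ → A) : Set (List A) := {u | u ≠ [] ∧ Occurs u ω}

/-- The set of length-`ℓ` words occurring in a configuration. -/
def DictLen (ω : ℤ → A) (ℓ : ℕ) : Set (List A) := {u | u.length = ℓ ∧ Occurs u ω}

/-- The extension of a substitution rule `S : A → List A` to words, by concatenation. -/
def wordSub (S : A → List A) (u : List A) : List A := (u.map S).flatten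

/-- A word is legal for `S` if it is an infix of `Sⁿ(a)` for some letter `a` and `n : ℕ`. -/
def Legal (S : A → List A) (u : List A) : Prop :=
  ∃ (a : A) (n : ℕ), u <:+: (wordSub S)^[n] [a]

/-- `S` is primitive: some power `p ≥ 1` of `S` maps every letter to a word containing
all letters. -/
def Primitive (S : A → List A) : Prop :=
  ∃ p : ℕ, 1 ≤ p ∧ ∀ a b : A, b ∈ (wordSub S)^[p] [a]

/-- The starting position (in `S ω`) of the block coming from the letter `ω k`. -/
def blockStart (S : A → List A) (ω : ℤ → A) (k : ℤ) : ℤ :=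
  if 0 ≤ k then ((List.range k.toNat).map fun i => ((S (ω i)).length : ℤ)).sum
  else -((List.range (-k).toNat).map fun i => ((S (ω (-(i : ℤ) - 1))).length : ℤ)).sum

open Classical in
/-- The extension of a substitution to two-sided configurations: the block structure of
`S ω` is `⋯ S(ω(-1)) . S(ω 0) S(ω 1) ⋯`, with the block of `ω 0` starting at position `0`. -/
noncomputable def confSub [Nonempty A] (S : A → List A) (ω : ℤ → A) : ℤ → A := fun n =>
  if h : ∃ k : ℤ, blockStart S ω k ≤ n ∧ n < blockStart S ω (k + 1) then
    (S (ω (Classical.choose h))).getD (n - blockStart S ω (Classical.choose h)).toNat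
      (Classical.arbitrary A)
  else Classical.arbitrary A

/-- The metric on configurations:
`d(ω₁, ω₂) = inf { 1/(r+1) : ω₁ and ω₂ agree on all |k| < r }`. -/
noncomputable def confDist (ω₁ ω₂ : ℤ → A) : ℝ :=
  sInf {x : ℝ | ∃ r : ℕ, x = 1 / (r + 1) ∧ ∀ k : ℤ, |k| < (r : ℤ) → ω₁ k = ω₂ k}

/-- Distance from a configuration to a set of configurations. -/
noncomputable def distToSet (ω : ℤ → A) (Ω : Set (ℤ → A)) : ℝ :=
  sInf (confDist ω '' Ω)

/-- The Hausdorff distance between two sets of configurations, induced by `confDist`. -/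
noncomputable def hausDist (Ω₁ Ω₂ : Set (ℤ → A)) : ℝ :=
  max (sSup ((fun ω => distToSet ω Ω₂) '' Ω₁)) (sSup ((fun ω => distToSet ω Ω₁) '' Ω₂))

/-- The product topology on `ℤ → A`, where `A` carries the discrete topology. -/
def confTop (A : Type*) : TopologicalSpace (ℤ → A) :=
  @Pi.topologicalSpace ℤ (fun _ => A) fun _ => ⊥

/-- The shift orbit of a configuration. -/
def orbit (ω : ℤ → A) : Set (ℤ → A) := {η | ∃ m : ℤ, η = shift m ω}

/-- The hull of a configuration: the closure of its shift orbit in the product topology. -/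
def hull (ω : ℤ → A) : Set (ℤ → A) := @closure _ (confTop A) (orbit ω)

/-- The `n`-th iterated hull `Ωₙ(ω₀)`: the hull of `Sⁿ(ω₀)`. -/
noncomputable def IHS [Nonempty A] (S : A → List A) (ω₀ : ℤ → A) (n : ℕ) : Set (ℤ → A) :=
  hull ((confSub S)^[n] ω₀)

/-- The substitution subshift `Ω(S) = {ω : W(ω) ⊆ W(S)}`. -/
def OmegaS (S : A → List A) : Set (ℤ → A) := {ω | ∀ u ∈ Dict ω, Legal S u}

/-- Edges of the directed graph `G(S)`: `u → w` iff `u, w` are both illegal and `w` is an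
infix of `S(u)`. -/
def GEdge (S : A → List A) (u w : List A) : Prop :=
  ¬Legal S u ∧ ¬Legal S w ∧ w <:+: wordSub S u

/-- `p` is a directed path of length `ℓ` in `G(S)` (on the vertex set of `2`-words). -/
def GPath (S : A → List A) (p : ℕ → List A) (ℓ : ℕ) : Prop :=
  (∀ i ≤ ℓ, (p i).length = 2) ∧ ∀ j < ℓ, GEdge S (p j) (p (j + 1))

/-- An initial configuration is good for `S` if every directed path in `G(S)` starting at a
`2`-word occurring in `ω₀` has length `< |A|²`. -/
def GoodInit [Fintype A] (S : A → List A) (ω₀ : ℤ → A) : Prop :=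
  ∀ (p : ℕ → List A) (ℓ : ℕ), GPath S p ℓ → Occurs (p 0) ω₀ → ℓ < (Fintype.card A) ^ 2

/-- The substitution matrix of `S`: `M(S)_{a,b}` is the number of occurrences of `a`
in `S(b)`. -/
def subMatrix [Fintype A] [DecidableEq A] (S : A → List A) : Matrix A A ℝ :=
  fun a b => ((S b).count a : ℝ)

/-- The Perron–Frobenius eigenvalue of `S`: the spectral radius of its substitution
matrix (viewed as a complex matrix). -/
noncomputable def pfEigenvalue [Fintype A] [DecidableEq A] (S : A → List A) : ℝ :=
  (spectralRadius ℂ ((subMatrix S).map (algebraMap ℝ ℂ))).toReal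

/-- The periodic configuration `u^∞`, satisfying `u^∞(n) = u(n mod |u|)`. -/
noncomputable def perConf [Nonempty A] (u : List A) : ℤ → A := fun n =>
  u.getD (n % (u.length : ℤ)).toNat (Classical.arbitrary A)

/-- `ℓ²(ℤ, ℂ)`. -/
abbrev l2Z : Type := lp (fun _ : ℤ => ℂ) 2

/-- `H` is the Schrödinger operator on `ℓ²(ℤ,ℂ)` with potential `v ∘ ω`:
`(H ψ)(n) = -(ψ(n+1) + ψ(n-1) - 2ψ(n)) + v(ω(n)) ψ(n)`. -/
def IsSchrodinger (v : A → ℝ) (ω : ℤ → A) (H : l2Z →L[ℂ] l2Z) : Prop :=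
  ∀ (ψ : l2Z) (n : ℤ),
    (H ψ : ℤ → ℂ) n = -((ψ : ℤ → ℂ) (n + 1) + (ψ : ℤ → ℂ) (n - 1) - 2 * (ψ : ℤ → ℂ) n)
      + (v (ω n) : ℂ) * (ψ : ℤ → ℂ) n

/-- The spectrum of `H`, viewed as a subset of `ℝ`. -/
def realSpectrum (H : l2Z →L[ℂ] l2Z) : Set ℝ := {x : ℝ | (x : ℂ) ∈ spectrum ℂ H}


section AuxStmt1

variable {A : Type*}

lemma confDist_bddBelow (ω₁ ω₂ : ℤ → A) :
    BddBelow {x : ℝ | ∃ r : ℕ, x = 1 / (r + 1) ∧ ∀ k : ℤ, |k| < (r : ℤ) → ω₁ k = ω₂ k} := by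
  refine ⟨0, ?_⟩
  rintro x ⟨r, rfl, -⟩
  positivity

lemma confDist_set_mem_one (ω₁ ω₂ : ℤ → A) :
    (1 : ℝ) ∈ {x : ℝ | ∃ r : ℕ, x = 1 / (r + 1) ∧ ∀ k : ℤ, |k| < (r : ℤ) → ω₁ k = ω₂ k} :=
  ⟨0, by norm_num, fun k hk => absurd hk (not_lt.2 (abs_nonneg k))⟩

lemma confDist_nonneg (ω₁ ω₂ : ℤ → A) : 0 ≤ confDist ω₁ ω₂ := by
  apply le_csInf ⟨1, confDist_set_mem_one ω₁ ω₂⟩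
  rintro x ⟨r, rfl, -⟩
  positivity

lemma confDist_le_one (ω₁ ω₂ : ℤ → A) : confDist ω₁ ω₂ ≤ 1 :=
  csInf_le (confDist_bddBelow ω₁ ω₂) (confDist_set_mem_one ω₁ ω₂)

lemma confDist_le_of_agree (ω₁ ω₂ : ℤ → A) (ρ : ℕ)
    (h : ∀ k : ℤ, |k| < (ρ : ℤ) → ω₁ k = ω₂ k) :
    confDist ω₁ ω₂ ≤ 1 / ((ρ : ℝ) + 1) :=
  csInf_le (confDist_bddBelow ω₁ ω₂) ⟨ρ, rfl, h⟩

lemma le_confDist_of_disagree (ω₁ ω₂ : ℤ → A) (ρ : ℕ) (k₀ : ℤ)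
    (hk₀ : |k₀| < (ρ : ℤ)) (hne : ω₁ k₀ ≠ ω₂ k₀) :
    1 / (ρ : ℝ) ≤ confDist ω₁ ω₂ := by
  apply le_csInf ⟨1, confDist_set_mem_one ω₁ ω₂⟩
  rintro x ⟨r, rfl, hr⟩
  have hrρ : (r : ℤ) ≤ |k₀| := by
    by_contra h
    exact hne (hr k₀ (lt_of_not_ge h))
  have h1 : (r : ℝ) + 1 ≤ ρ := by
    have : (r : ℤ) + 1 ≤ ρ := by omega
    exact_mod_cast this
  have hρ0 : (0 : ℝ) < ρ := by
    have : (0 : ℤ) < ρ := lt_of_le_of_lt (abs_nonneg k₀) hk₀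
    exact_mod_cast this
  rw [div_le_div_iff₀ hρ0 (by positivity)]
  linarith

lemma distToSet_bddBelow (ω : ℤ → A) (Ω : Set (ℤ → A)) :
    BddBelow (confDist ω '' Ω) := by
  refine ⟨0, ?_⟩
  rintro x ⟨η, -, rfl⟩
  exact confDist_nonneg ω η

lemma distToSet_le (ω : ℤ → A) (Ω : Set (ℤ → A)) (ρ : ℕ) (η : ℤ → A) (hη : η ∈ Ω)
    (h : ∀ k : ℤ, |k| < (ρ : ℤ) → ω k = η k) :
    distToSet ω Ω ≤ 1 / ((ρ : ℝ) + 1) :=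
  le_trans (csInf_le (distToSet_bddBelow ω Ω) ⟨η, hη, rfl⟩) (confDist_le_of_agree ω η ρ h)

lemma distToSet_le_one (ω : ℤ → A) (Ω : Set (ℤ → A)) (hΩ : Ω.Nonempty) :
    distToSet ω Ω ≤ 1 := by
  obtain ⟨η, hη⟩ := hΩ
  exact le_trans (csInf_le (distToSet_bddBelow ω Ω) ⟨η, hη, rfl⟩) (confDist_le_one ω η)

lemma exists_agree_of_distToSet_le (ω : ℤ → A) (Ω : Set (ℤ → A)) (hΩ : Ω.Nonempty)
    (ρ : ℕ) (hρ : 1 ≤ ρ) (h : distToSet ω Ω ≤ 1 / ((ρ : ℝ) + 1)) :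
    ∃ η ∈ Ω, ∀ k : ℤ, |k| < (ρ : ℤ) → ω k = η k := by
  by_contra hcon
  push_neg at hcon
  have hlb : 1 / (ρ : ℝ) ≤ distToSet ω Ω := by
    apply le_csInf (hΩ.image _)
    rintro x ⟨η, hη, rfl⟩
    obtain ⟨k₀, hk₀, hne⟩ := hcon η hη
    exact le_confDist_of_disagree ω η ρ k₀ hk₀ hne
  have hρ0 : (0 : ℝ) < ρ := by exact_mod_cast hρ
  have : 1 / ((ρ : ℝ) + 1) < 1 / ρ := by
    apply one_div_lt_one_div_of_lt hρ0
    linarith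
  linarith

lemma map_coe_range {B : Type*} (f : ℤ → B) (n : ℕ) :
    List.map f (do let a ← List.range n; pure ((a : ℕ) : ℤ))
      = List.map (fun i : ℕ => f i) (List.range n) := by
  generalize List.range n = l
  induction l with
  | nil => rfl
  | cons a l ih => simpa using ih

lemma subset_of_approx (Ω₁ Ω₂ : Set (ℤ → A))
    (h₁inv : ∀ ω ∈ Ω₁, ∀ m : ℤ, shift m ω ∈ Ω₁)
    (ρ : ℕ) (hρ : 1 ≤ ρ)
    (happrox : ∀ ω ∈ Ω₁, ∃ η ∈ Ω₂, ∀ k : ℤ, |k| < (ρ : ℤ) → ω k = η k) :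
    (⋃ ω ∈ Ω₁, DictLen ω (2 * ρ - 1)) ⊆ ⋃ ω ∈ Ω₂, DictLen ω (2 * ρ - 1) := by
  intro u hu
  simp only [Set.mem_iUnion] at hu ⊢
  obtain ⟨ω, hω, hlen, k, hocc⟩ := hu
  rw [hlen, map_coe_range] at hocc
  have hLZ : (((2 * ρ - 1 : ℕ)) : ℤ) = 2 * (ρ : ℤ) - 1 := by
    have h2 : (1 : ℕ) ≤ 2 * ρ := by omega
    push_cast [Nat.cast_sub h2]
    ring
  set p : ℤ := 1 - (ρ : ℤ) with hp
  have hω' : shift (p - k) ω ∈ Ω₁ := h₁inv ω hω _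
  obtain ⟨η, hη, hagree⟩ := happrox _ hω'
  refine ⟨η, hη, hlen, p, ?_⟩
  rw [hlen, map_coe_range, hocc]
  apply List.map_congr_left
  intro i hi
  rw [List.mem_range] at hi
  have hi' : (i : ℤ) < 2 * (ρ : ℤ) - 1 := by
    have : (i : ℤ) < ((2 * ρ - 1 : ℕ) : ℤ) := by exact_mod_cast hi
    omega
  have habs : |p + (i : ℤ)| < (ρ : ℤ) := by
    rw [abs_lt]
    constructor <;> omega
  have h1 : shift (p - k) ω (p + (i : ℤ)) = ω (k + i) := by
    show ω (p + (i : ℤ) - (p - k)) = ω (k + i)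
    congr 1
    ring
  rw [← h1, hagree _ habs]

lemma approx_of_subset (Ω₁ Ω₂ : Set (ℤ → A))
    (h₂inv : ∀ ω ∈ Ω₂, ∀ m : ℤ, shift m ω ∈ Ω₂)
    (ρ : ℕ) (hρ : 1 ≤ ρ)
    (hsub : (⋃ ω ∈ Ω₁, DictLen ω (2 * ρ - 1)) ⊆ ⋃ ω ∈ Ω₂, DictLen ω (2 * ρ - 1)) :
    ∀ ω ∈ Ω₁, ∃ η ∈ Ω₂, ∀ k : ℤ, |k| < (ρ : ℤ) → ω k = η k := by
  intro ω hω
  set L : ℕ := 2 * ρ - 1 with hL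
  have hLZ : ((L : ℕ) : ℤ) = 2 * (ρ : ℤ) - 1 := by
    rw [hL]
    have h2 : (1 : ℕ) ≤ 2 * ρ := by omega
    push_cast [Nat.cast_sub h2]
    ring
  set p : ℤ := 1 - (ρ : ℤ) with hp
  set u : List A := (List.range L).map (fun i : ℕ => ω (p + (i : ℤ))) with hu
  have hulen : u.length = L := by rw [hu]; simp
  have humem : u ∈ ⋃ ω ∈ Ω₁, DictLen ω L := by
    simp only [Set.mem_iUnion]
    exact ⟨ω, hω, hulen, p, by rw [hulen, map_coe_range]⟩
  obtain ⟨η', hη', -, k', hocc⟩ := by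
    have := hsub humem
    simpa only [Set.mem_iUnion] using this
  rw [hulen, map_coe_range] at hocc
  have key : ∀ i ∈ List.range L, ω (p + (i : ℤ)) = η' (k' + (i : ℤ)) :=
    List.map_inj_left.mp (hu.symm.trans hocc)
  refine ⟨shift (p - k') η', h₂inv η' hη' _, ?_⟩
  intro j hj
  rw [abs_lt] at hj
  have hjex : ∃ i : ℕ, (i : ℤ) = j - p ∧ i < L := by
    refine ⟨(j - p).toNat, by omega, ?_⟩
    have : ((j - p).toNat : ℤ) < (L : ℤ) := by
      rw [hLZ]
      omega
    exact_mod_cast this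
  obtain ⟨i, hi1, hi2⟩ := hjex
  have hj' : j = p + (i : ℤ) := by omega
  rw [hj', key i (List.mem_range.mpr hi2)]
  show η' (k' + (i : ℤ)) = η' (p + (i : ℤ) - (p - k'))
  congr 1
  ring

end AuxStmt1

/-- quantitative correspondence between Hausdorff distance of subshifts and
agreement of their dictionaries on words of length `2ρ - 1`. -/
theorem stmt1 {A : Type*} [Fintype A] [Nonempty A] (Ω₁ Ω₂ : Set (ℤ → A))
    (h₁ne : Ω₁.Nonempty) (h₁cl : @IsClosed _ (confTop A) Ω₁)
    (h₁inv : ∀ ω ∈ Ω₁, ∀ m : ℤ, shift m ω ∈ Ω₁)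
    (h₂ne : Ω₂.Nonempty) (h₂cl : @IsClosed _ (confTop A) Ω₂)
    (h₂inv : ∀ ω ∈ Ω₂, ∀ m : ℤ, shift m ω ∈ Ω₂)
    (ρ : ℕ) (hρ : 1 ≤ ρ) :
    hausDist Ω₁ Ω₂ ≤ 1 / ((ρ : ℝ) + 1) ↔
      (⋃ ω ∈ Ω₁, DictLen ω (2 * ρ - 1)) = ⋃ ω ∈ Ω₂, DictLen ω (2 * ρ - 1) := by
  constructor
  · intro hH
    have hH1 : sSup ((fun ω => distToSet ω Ω₂) '' Ω₁) ≤ 1 / ((ρ : ℝ) + 1) :=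
      le_trans (le_max_left _ _) hH
    have hH2 : sSup ((fun ω => distToSet ω Ω₁) '' Ω₂) ≤ 1 / ((ρ : ℝ) + 1) :=
      le_trans (le_max_right _ _) hH
    have h12 : ∀ ω ∈ Ω₁, distToSet ω Ω₂ ≤ 1 / ((ρ : ℝ) + 1) := by
      intro ω hω
      refine le_trans (le_csSup ⟨1, ?_⟩ (Set.mem_image_of_mem (fun ω => distToSet ω Ω₂) hω)) hH1
      rintro x ⟨ω', hω', rfl⟩
      exact distToSet_le_one ω' Ω₂ h₂ne
    have h21 : ∀ ω ∈ Ω₂, distToSet ω Ω₁ ≤ 1 / ((ρ : ℝ) + 1) := by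
      intro ω hω
      refine le_trans (le_csSup ⟨1, ?_⟩ (Set.mem_image_of_mem (fun ω => distToSet ω Ω₁) hω)) hH2
      rintro x ⟨ω', hω', rfl⟩
      exact distToSet_le_one ω' Ω₁ h₁ne
    have ha12 : ∀ ω ∈ Ω₁, ∃ η ∈ Ω₂, ∀ k : ℤ, |k| < (ρ : ℤ) → ω k = η k :=
      fun ω hω => exists_agree_of_distToSet_le ω Ω₂ h₂ne ρ hρ (h12 ω hω)
    have ha21 : ∀ ω ∈ Ω₂, ∃ η ∈ Ω₁, ∀ k : ℤ, |k| < (ρ : ℤ) → ω k = η k :=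
      fun ω hω => exists_agree_of_distToSet_le ω Ω₁ h₁ne ρ hρ (h21 ω hω)
    exact Set.Subset.antisymm (subset_of_approx Ω₁ Ω₂ h₁inv ρ hρ ha12)
      (subset_of_approx Ω₂ Ω₁ h₂inv ρ hρ ha21)
  · intro hW
    have ha12 := approx_of_subset Ω₁ Ω₂ h₂inv ρ hρ hW.subset
    have ha21 := approx_of_subset Ω₂ Ω₁ h₁inv ρ hρ hW.superset
    have hc : (0 : ℝ) ≤ 1 / ((ρ : ℝ) + 1) := by positivity
    apply max_le
    · apply Real.sSup_le _ hc
      rintro x ⟨ω, hω, rfl⟩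
      obtain ⟨η, hη, hagree⟩ := ha12 ω hω
      exact distToSet_le ω Ω₂ ρ η hη hagree
    · apply Real.sSup_le _ hc
      rintro x ⟨ω, hω, rfl⟩
      obtain ⟨η, hη, hagree⟩ := ha21 ω hω
      exact distToSet_le ω Ω₁ ρ η hη hagree

end QC
end

section
/- Let A be a nonempty finite alphabet and S a substitution on A (each S(a) a nonempty word). Let v be any word over A, and let u be a word of length 2 that is not legal for S and is an infix of S(v). Then there exists a word w of length 2 such that w is an infix of v, w is not legal for S, and u is an infix of S(w). -/
namespace QC

variable {A : Type*}

lemma infix_append_split {α : Type*} {u l1 l2 : List α} (h : u <:+: l1 ++ l2) :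
    u <:+: l1 ∨ u <:+: l2 ∨
      ∃ u1 u2, u = u1 ++ u2 ∧ u1 ≠ [] ∧ u2 ≠ [] ∧ u1 <:+ l1 ∧ u2 <+: l2 := by
  obtain ⟨s, t, hst⟩ := h
  by_cases h1 : s.length + u.length ≤ l1.length
  · left
    have hp : s ++ u <+: l1 ++ l2 := ⟨t, by simpa [List.append_assoc] using hst⟩
    have hp1 : s ++ u <+: l1 := by
      rw [List.prefix_iff_eq_take] at hp ⊢
      rw [List.take_append] at hp
      simpa [Nat.sub_eq_zero_of_le (by simpa using h1)] using hp
    exact ((List.suffix_append s u).isInfix).trans hp1.isInfix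
  · by_cases h2 : l1.length ≤ s.length
    · right; left
      have hst' : s ++ (u ++ t) = l1 ++ l2 := by simpa [List.append_assoc] using hst
      have hdrop : u ++ t = l2.drop (s.length - l1.length) := by
        have := congrArg (List.drop s.length) hst'
        rw [List.drop_left, List.drop_append,
          List.drop_eq_nil_of_le h2, List.nil_append] at this
        exact this
      exact ((List.prefix_append u t).isInfix).trans
        ((hdrop ▸ List.drop_suffix _ l2).isInfix)
    · right; right
      push_neg at h1 h2
      refine ⟨u.take (l1.length - s.length), u.drop (l1.length - s.length),
        (List.take_append_drop _ u).symm, ?_, ?_, ?_, ?_⟩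
      · have : 0 < (u.take (l1.length - s.length)).length := by
          rw [List.length_take]; omega
        exact List.ne_nil_of_length_pos this
      · have : 0 < (u.drop (l1.length - s.length)).length := by
          rw [List.length_drop]; omega
        exact List.ne_nil_of_length_pos this
      · refine ⟨s, ?_⟩
        have := congrArg (List.take l1.length) hst
        rw [List.take_append, List.take_append,
          List.take_of_length_le (le_of_lt h2),
          show l1.length - (s ++ u).length = 0 by simp; omega,
          List.take_zero, List.append_nil, List.take_left] at this
        exact this
      · refine ⟨t, ?_⟩
        have := congrArg (List.drop l1.length) hst
        rw [List.drop_append, List.drop_append,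
          List.drop_eq_nil_of_le (le_of_lt h2),
          show l1.length - (s ++ u).length = 0 by simp; omega,
          List.drop_zero, List.nil_append,
          List.drop_left] at this
        exact this

lemma wordSub_append (S : A → List A) (l1 l2 : List A) :
    wordSub S (l1 ++ l2) = wordSub S l1 ++ wordSub S l2 := by simp [wordSub]

lemma wordSub_infix (S : A → List A) {l m : List A} (h : l <:+: m) :
    wordSub S l <:+: wordSub S m := by
  obtain ⟨s, t, rfl⟩ := h
  exact ⟨wordSub S s, wordSub S t, by simp [wordSub_append]⟩

lemma legal_of_infix_wordSub {S : A → List A} {w u : List A} (hw : Legal S w)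
    (h : u <:+: wordSub S w) : Legal S u := by
  obtain ⟨a, n, hn⟩ := hw
  exact ⟨a, n + 1, h.trans (by rw [Function.iterate_succ_apply']; exact wordSub_infix S hn)⟩

/-- an illegal `2`-word inside `S(v)` comes from an illegal `2`-word of `v`. -/
theorem stmt2 {A : Type*} [Fintype A] [Nonempty A] (S : A → List A) (hS : ∀ a, S a ≠ [])
    (v : List A) (hv : v ≠ []) (u : List A) (hu : u.length = 2)
    (hu_illegal : ¬Legal S u) (hu_inf : u <:+: wordSub S v) :
    ∃ w : List A, w.length = 2 ∧ w <:+: v ∧ ¬Legal S w ∧ u <:+: wordSub S w := by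
  induction v with
  | nil => exact absurd rfl hv
  | cons a v' ih =>
    rw [show wordSub S (a :: v') = S a ++ wordSub S v' by simp [wordSub]] at hu_inf
    rcases infix_append_split hu_inf with h | h | ⟨u1, u2, rfl, hu1ne, hu2ne, hu1, hu2⟩
    · exact absurd ⟨a, 1, by simpa [wordSub] using h⟩ hu_illegal
    · have hv' : v' ≠ [] := by
        rintro rfl
        rw [show wordSub S ([] : List A) = [] from rfl, List.infix_nil] at h
        simp [h] at hu
      obtain ⟨w, hw2, hwinf, hwleg, huw⟩ := ih hv' h
      exact ⟨w, hw2, hwinf.trans (List.infix_cons (List.infix_refl v')), hwleg, huw⟩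
    · have hv' : v' ≠ [] := by
        rintro rfl
        rw [show wordSub S ([] : List A) = [] from rfl, List.prefix_nil] at hu2
        exact hu2ne hu2
      obtain ⟨b, v'', rfl⟩ := List.exists_cons_of_ne_nil hv'
      have hl1 : 0 < u1.length := List.length_pos_iff.mpr hu1ne
      have hl2 : 0 < u2.length := List.length_pos_iff.mpr hu2ne
      have hlen : u1.length + u2.length = 2 := by simpa using hu
      have hu2' : u2 <+: S b := by
        have h' : u2 <+: S b ++ wordSub S v'' := by
          rw [show wordSub S (b :: v'') = S b ++ wordSub S v'' by simp [wordSub]] at hu2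
          exact hu2
        rw [List.prefix_iff_eq_take] at h' ⊢
        rw [List.take_append] at h'
        have hsb : 0 < (S b).length := List.length_pos_iff.mpr (hS b)
        rw [show u2.length - (S b).length = 0 by omega, List.take_zero,
          List.append_nil] at h'
        exact h'
      have hkey : u1 ++ u2 <:+: wordSub S [a, b] := by
        obtain ⟨s, hs⟩ := hu1
        obtain ⟨t, ht⟩ := hu2'
        refine ⟨s, t, ?_⟩
        rw [show wordSub S [a, b] = S a ++ S b by simp [wordSub], ← hs, ← ht]
        simp [List.append_assoc]
      refine ⟨[a, b], rfl, ⟨[], v'', rfl⟩, ?_, hkey⟩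
      intro hleg
      exact hu_illegal (legal_of_infix_wordSub hleg hkey)


end QC
end

section
/- Let A be a nonempty finite alphabet and S a primitive substitution on A. Let θ > 1, and suppose Č > 0 satisfies Č·θⁿ ≤ |Sⁿ(a)| for all a ∈ A and n ∈ ℕ, and that C_S ≥ 1 is a linear repetitivity constant for S (every legal word u is an infix of every legal word w with |w| ≥ C_S·|u|). Then for every configuration ω₀ : ℤ → A, every r ≥ 1, and every n ∈ ℕ with n ≥ (log r)/(log θ) + (log C_S − log Č)/(log θ), every legal word of length r occurs in the configuration Sⁿ(ω₀), i.e. W(S)_r ⊆ W(Sⁿ(ω₀))_r. -/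
namespace QC

variable {A : Type*}

/-!
The configuration `Sⁿ(ω₀)` carries the legal word `Sⁿ(ω₀ 0)` at positions `0, …, |Sⁿ(ω₀ 0)| - 1`,
since `S` maps the letter at position `k` to the block starting at `blockStart S ω k`. The bound on
`n` gives `C_S · r ≤ Č · θⁿ ≤ |Sⁿ(ω₀ 0)|`, so by linear repetitivity every legal word of length `r`
is an infix of `Sⁿ(ω₀ 0)` and hence occurs in `Sⁿ(ω₀)`.
-/

def OccursAt (u : List A) (ω : ℤ → A) (k : ℤ) : Prop :=
  ∀ (i : ℕ) (hi : i < u.length), ω (k + i) = u[i]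

theorem OccursAt.occurs {u : List A} {ω : ℤ → A} {k : ℤ} (h : OccursAt u ω k) :
    Occurs u ω := by
  refine ⟨k, List.ext_getElem (by simp) fun i hi _ => ?_⟩
  simp only [List.pure_def, List.bind_eq_flatMap, ← List.map_eq_flatMap, List.getElem_map,
    List.getElem_range]
  exact (h i hi).symm

theorem occursAt_append {s t : List A} {ω : ℤ → A} {k : ℤ} :
    OccursAt (s ++ t) ω k ↔ OccursAt s ω k ∧ OccursAt t ω (k + s.length) := by
  refine ⟨fun h => ⟨fun i hi => ?_, fun i hi => ?_⟩, fun ⟨hs, ht⟩ i hi => ?_⟩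
  · rw [h i (by simp; omega), List.getElem_append_left hi]
  · have := h (s.length + i) (by simp; omega)
    rw [List.getElem_append_right (by omega)] at this
    simpa [add_assoc] using this
  · rcases lt_or_ge i s.length with his | his
    · rw [List.getElem_append_left his, hs i his]
    · obtain ⟨j, rfl⟩ := Nat.exists_eq_add_of_le his
      rw [List.getElem_append_right (by omega)]
      simpa [add_assoc] using ht j (by rw [List.length_append] at hi; omega)

theorem OccursAt.occurs_of_infix {u v : List A} {ω : ℤ → A} {k : ℤ} (hv : OccursAt v ω k)
    (huv : u <:+: v) : Occurs u ω := by
  obtain ⟨s, t, rfl⟩ := huv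
  exact (occursAt_append.1 (occursAt_append.1 hv).1).2.occurs

section blockStart

variable (S : A → List A) (ω : ℤ → A)

theorem blockStart_neg_natCast (j : ℕ) :
    blockStart S ω (-j) =
      -((List.range j).map fun i => ((S (ω (-(i : ℤ) - 1))).length : ℤ)).sum := by
  rcases j with _ | j
  · simp [blockStart]
  · rw [blockStart, if_neg (by omega)]
    simp

theorem blockStart_add_one (k : ℤ) :
    blockStart S ω (k + 1) = blockStart S ω k + (S (ω k)).length := by
  rcases le_or_gt 0 k with hk | hk
  · lift k to ℕ using hk
    rw [blockStart, blockStart, if_pos (by omega), if_pos (by omega), ← Nat.cast_succ,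
      Int.toNat_natCast, Int.toNat_natCast, List.range_succ]
    simp
  · obtain ⟨j, rfl⟩ : ∃ j : ℕ, k = -((j + 1 : ℕ) : ℤ) := ⟨(-k - 1).toNat, by omega⟩
    rw [show -((j + 1 : ℕ) : ℤ) + 1 = -(j : ℤ) by push_cast; ring, blockStart_neg_natCast,
      blockStart_neg_natCast, List.range_succ]
    simp [neg_add_eq_sub]

theorem blockStart_strictMono (hS : ∀ a, S a ≠ []) : StrictMono (blockStart S ω) :=
  strictMono_int_of_lt_succ fun k => by
    rw [blockStart_add_one]
    have := List.length_pos_iff.2 (hS (ω k))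
    omega

theorem blockStart_zero : blockStart S ω 0 = 0 := by simp [blockStart]

end blockStart

theorem occursAt_blockStart [Nonempty A] {S : A → List A} (hS : ∀ a, S a ≠ []) (ω : ℤ → A)
    (k : ℤ) : OccursAt (S (ω k)) (confSub S ω) (blockStart S ω k) := by
  intro i hi
  have hmono := blockStart_strictMono S ω hS
  have hex : ∃ k', blockStart S ω k' ≤ blockStart S ω k + i ∧
      blockStart S ω k + i < blockStart S ω (k' + 1) :=
    ⟨k, by omega, by rw [blockStart_add_one]; omega⟩
  obtain ⟨h₁, h₂⟩ := Classical.choose_spec hex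
  have hchoose : Classical.choose hex = k := by
    apply le_antisymm <;> rw [← Int.lt_add_one_iff, ← hmono.lt_iff_lt]
    · rw [blockStart_add_one]; omega
    · omega
  unfold confSub
  rw [dif_pos hex, hchoose, add_sub_cancel_left, Int.toNat_natCast, List.getD_eq_getElem _ _ hi]

theorem OccursAt.confSub [Nonempty A] {S : A → List A} (hS : ∀ a, S a ≠ []) {v : List A}
    {ω : ℤ → A} {k : ℤ} (h : OccursAt v ω k) :
    OccursAt (wordSub S v) (confSub S ω) (blockStart S ω k) := by
  induction v generalizing k with
  | nil => intro i hi; simp [wordSub] at hi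
  | cons a v ih =>
    obtain ⟨ha, hv⟩ := occursAt_append.1 (show OccursAt ([a] ++ v) ω k from h)
    obtain rfl : ω k = a := by simpa using ha 0
    refine occursAt_append.2 ⟨occursAt_blockStart hS ω k, ?_⟩
    rw [← blockStart_add_one]
    exact ih (by simpa using hv)

theorem occursAt_iterate_confSub [Nonempty A] {S : A → List A} (hS : ∀ a, S a ≠ [])
    (ω : ℤ → A) (n : ℕ) : OccursAt ((wordSub S)^[n] [ω 0]) ((confSub S)^[n] ω) 0 := by
  induction n with
  | zero =>
    intro i hi
    obtain rfl : i = 0 := by simpa using hi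
    rfl
  | succ n ih =>
    rw [Function.iterate_succ_apply', Function.iterate_succ_apply',
      ← blockStart_zero S ((confSub S)^[n] ω)]
    exact ih.confSub hS

theorem mul_le_mul_pow_of_log_div_le {θ x C c : ℝ} {n : ℕ} (hθ : 1 < θ) (hx : 0 < x)
    (hC : 0 < C) (hc : 0 < c)
    (h : Real.log x / Real.log θ + (Real.log C - Real.log c) / Real.log θ ≤ n) :
    C * x ≤ c * θ ^ n := by
  rw [← add_div, div_le_iff₀ (Real.log_pos hθ)] at h
  have hlog : Real.log (C * x / c) ≤ Real.log (θ ^ n) := by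
    rw [Real.log_div (by positivity) hc.ne', Real.log_mul hC.ne' hx.ne', Real.log_pow]
    linarith
  rw [Real.log_le_log_iff (by positivity) (by positivity), div_le_iff₀ hc] at hlog
  linarith

theorem stmt9_general {A : Type*} [Nonempty A] (S : A → List A) (hS : ∀ a, S a ≠ [])
    (θ : ℝ) (hθ : 1 < θ) (Cl : ℝ) (hCl : 0 < Cl)
    (hgrow : ∀ (a : A) (n : ℕ), Cl * θ ^ n ≤ (((wordSub S)^[n] [a]).length : ℝ))
    (CS : ℝ) (hCS : 1 ≤ CS)
    (hlr : ∀ u w : List A, Legal S u → Legal S w →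
      CS * (u.length : ℝ) ≤ (w.length : ℝ) → u <:+: w) :
    ∀ (ω₀ : ℤ → A) (r : ℕ), 1 ≤ r → ∀ n : ℕ,
      Real.log r / Real.log θ + (Real.log CS - Real.log Cl) / Real.log θ ≤ (n : ℝ) →
      ∀ u : List A, u.length = r → Legal S u → Occurs u ((confSub S)^[n] ω₀) := by
  intro ω₀ r hr n hn u hu hu_legal
  refine (occursAt_iterate_confSub hS ω₀ n).occurs_of_infix
    (hlr u _ hu_legal ⟨ω₀ 0, n, List.infix_rfl⟩ ?_)
  calc CS * (u.length : ℝ)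
      ≤ Cl * θ ^ n := by
        rw [hu]
        exact mul_le_mul_pow_of_log_div_le hθ (by exact_mod_cast hr) (by linarith) hCl hn
    _ ≤ _ := hgrow (ω₀ 0) n

/-- for `n ≥ log r / log θ + (log C_S - log Č)/ log θ`, every legal word of
length `r` occurs in `Sⁿ(ω₀)`. -/
theorem stmt9 {A : Type*} [Fintype A] [Nonempty A] (S : A → List A) (hS : ∀ a, S a ≠ [])
    (hprim : Primitive S) (θ : ℝ) (hθ : 1 < θ) (Cl : ℝ) (hCl : 0 < Cl)
    (hgrow : ∀ (a : A) (n : ℕ), Cl * θ ^ n ≤ (((wordSub S)^[n] [a]).length : ℝ))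
    (CS : ℝ) (hCS : 1 ≤ CS)
    (hlr : ∀ u w : List A, Legal S u → Legal S w →
      CS * (u.length : ℝ) ≤ (w.length : ℝ) → u <:+: w) :
    ∀ (ω₀ : ℤ → A) (r : ℕ), 1 ≤ r → ∀ n : ℕ,
      Real.log r / Real.log θ + (Real.log CS - Real.log Cl) / Real.log θ ≤ (n : ℝ) →
      ∀ u : List A, u.length = r → Legal S u → Occurs u ((confSub S)^[n] ω₀) :=
  stmt9_general S hS θ hθ Cl hCl hgrow CS hCS hlr

end QC
end
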